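/- For the function φ(x) = |x|³/6 on the interval [-x₀, x₀] with x₀ > 0 (i.e., φ(t) = t³/6 for t ≥ 0 and φ(t) = -t³/6 for t ≤ 0), φ is C² with m₂ = 0, M₂ = x₀ on [-x₀,x₀], and |T_φ(-x₀,x₀)| = (1/288)(M₂ - m₂)(2x₀)². Hence any constant A with |T_φ(a,b)| ≤ A(M₂-m₂)(b-a)² valid for all C² functions satisfies A ≥ 1/288. -/

import Mathlib

/-! The function `|x|³/6` is `C²` with second derivative `|x|`, which ranges over `[0, x₀]` on
`[-x₀, x₀]`, while Simpson's functional evaluates to `x₀³/18 - x₀³/24 = x₀³/72`, which is exactly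
`(1/288) · x₀ · (2x₀)²`. Plugging this function into a bound `|T| ≤ A (M₂ - m₂)(b - a)²`
therefore forces `A ≥ 1/288`. -/

open Set intervalIntegral

lemma hasDerivAt_of_eqOn_Iic_Ici {f g h f' : ℝ → ℝ} {a x : ℝ}
    (hg : ∀ y ≤ a, HasDerivAt g (f' y) y) (hfg : EqOn f g (Iic a))
    (hh : ∀ y ≥ a, HasDerivAt h (f' y) y) (hfh : EqOn f h (Ici a)) :
    HasDerivAt f (f' x) x := by
  have hl : ∀ y ≤ a, HasDerivWithinAt f (f' y) (Iic a) y := fun y hy =>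
    (hg y hy).hasDerivWithinAt.congr hfg (hfg (mem_Iic.2 hy))
  have hr : ∀ y ≥ a, HasDerivWithinAt f (f' y) (Ici a) y := fun y hy =>
    (hh y hy).hasDerivWithinAt.congr hfh (hfh (mem_Ici.2 hy))
  rcases lt_trichotomy x a with hx | rfl | hx
  · exact (hl x hx.le).hasDerivAt (Iic_mem_nhds hx)
  · simpa [Iic_union_Ici] using (hl x le_rfl).union (hr x le_rfl)
  · exact (hr x hx.le).hasDerivAt (Ici_mem_nhds hx)

lemma hasDerivAt_mul_abs_div_two (x : ℝ) : HasDerivAt (fun y => y * |y| / 2) |x| x := by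
  refine hasDerivAt_of_eqOn_Iic_Ici (a := 0) (f' := fun y => |y|) (g := fun y => -(y ^ 2 / 2))
    (h := fun y => y ^ 2 / 2) (fun y hy => ?_) (fun y hy => ?_) (fun y hy => ?_) (fun y hy => ?_)
  · refine ((hasDerivAt_pow 2 y).div_const 2).neg.congr_deriv ?_
    rw [abs_of_nonpos hy]; ring
  · simp only [abs_of_nonpos (mem_Iic.1 hy)]; ring
  · refine ((hasDerivAt_pow 2 y).div_const 2).congr_deriv ?_
    rw [abs_of_nonneg hy]; ring
  · simp only [abs_of_nonneg (mem_Ici.1 hy)]; ring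

lemma hasDerivAt_abs_pow_three_div_six (x : ℝ) :
    HasDerivAt (fun y => |y| ^ 3 / 6) (x * |x| / 2) x := by
  refine hasDerivAt_of_eqOn_Iic_Ici (a := 0) (f' := fun y => y * |y| / 2)
    (g := fun y => -(y ^ 3 / 6)) (h := fun y => y ^ 3 / 6)
    (fun y hy => ?_) (fun y hy => ?_) (fun y hy => ?_) (fun y hy => ?_)
  · refine ((hasDerivAt_pow 3 y).div_const 6).neg.congr_deriv ?_
    rw [abs_of_nonpos hy]; ring
  · simp only [abs_of_nonpos (mem_Iic.1 hy)]; ring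
  · refine ((hasDerivAt_pow 3 y).div_const 6).congr_deriv ?_
    rw [abs_of_nonneg hy]; ring
  · simp only [abs_of_nonneg (mem_Ici.1 hy)]

lemma hasDerivAt_mul_abs_pow_three_div (x : ℝ) :
    HasDerivAt (fun y => y * |y| ^ 3 / 24) (|x| ^ 3 / 6) x := by
  refine hasDerivAt_of_eqOn_Iic_Ici (a := 0) (f' := fun y => |y| ^ 3 / 6)
    (g := fun y => -(y ^ 4 / 24)) (h := fun y => y ^ 4 / 24)
    (fun y hy => ?_) (fun y hy => ?_) (fun y hy => ?_) (fun y hy => ?_)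
  · refine ((hasDerivAt_pow 4 y).div_const 24).neg.congr_deriv ?_
    rw [abs_of_nonpos hy]; ring
  · simp only [abs_of_nonpos (mem_Iic.1 hy)]; ring
  · refine ((hasDerivAt_pow 4 y).div_const 24).congr_deriv ?_
    rw [abs_of_nonneg hy]; ring
  · simp only [abs_of_nonneg (mem_Ici.1 hy)]; ring

lemma contDiff_two_of_hasDerivAt {f f' f'' : ℝ → ℝ} (hf : ∀ x, HasDerivAt f (f' x) x)
    (hf' : ∀ x, HasDerivAt f' (f'' x) x) (hf'' : Continuous f'') : ContDiff ℝ 2 f := by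
  have hd : deriv f = f' := funext fun x => (hf x).deriv
  have hd' : deriv f' = f'' := funext fun x => (hf' x).deriv
  rw [show (2 : WithTop ℕ∞) = 1 + 1 from rfl, contDiff_succ_iff_deriv, hd,
    contDiff_one_iff_deriv, hd']
  exact ⟨fun x => (hf x).differentiableAt, by simp, fun x => (hf' x).differentiableAt, hf''⟩

lemma iteratedDeriv_two_of_hasDerivAt {f f' f'' : ℝ → ℝ} (hf : ∀ x, HasDerivAt f (f' x) x)
    (hf' : ∀ x, HasDerivAt f' (f'' x) x) : iteratedDeriv 2 f = f'' := by
  have hd : deriv f = f' := funext fun x => (hf x).deriv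
  rw [iteratedDeriv_succ, iteratedDeriv_one, hd]
  exact funext fun x => (hf' x).deriv

lemma integral_abs_pow_three_div_six {x₀ : ℝ} (hx₀ : 0 ≤ x₀) :
    ∫ t in (-x₀)..x₀, |t| ^ 3 / 6 = x₀ ^ 4 / 12 := by
  rw [integral_eq_sub_of_hasDerivAt (fun x _ => hasDerivAt_mul_abs_pow_three_div x)
    ((by fun_prop : Continuous fun t : ℝ => |t| ^ 3 / 6).intervalIntegrable _ _),
    abs_neg, abs_of_nonneg hx₀]
  ring

theorem simpson_stmt19 (x₀ : ℝ) (hx₀ : 0 < x₀) :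
    ContDiff ℝ 2 (fun x : ℝ => |x| ^ 3 / 6) ∧
      (∀ x ∈ Set.Icc (-x₀) x₀,
        0 ≤ iteratedDeriv 2 (fun x : ℝ => |x| ^ 3 / 6) x ∧
          iteratedDeriv 2 (fun x : ℝ => |x| ^ 3 / 6) x ≤ x₀) ∧
      |((|(-x₀ : ℝ)| ^ 3 / 6 + |x₀| ^ 3 / 6) / 6 + 2 / 3 * (|(0 : ℝ)| ^ 3 / 6) -
          (1 / (x₀ - -x₀)) * ∫ t in (-x₀)..x₀, |t| ^ 3 / 6)| =
        1 / 288 * (x₀ - 0) * (x₀ - -x₀) ^ 2 ∧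
      ∀ A : ℝ,
        (∀ (a b : ℝ), a < b → ∀ φ : ℝ → ℝ, ContDiff ℝ 2 φ →
          ∀ m₂ M₂ : ℝ,
            (∀ x ∈ Set.Icc a b, m₂ ≤ iteratedDeriv 2 φ x ∧ iteratedDeriv 2 φ x ≤ M₂) →
            |(φ a + φ b) / 6 + 2 / 3 * φ ((a + b) / 2) - (1 / (b - a)) * ∫ t in a..b, φ t| ≤
              A * (M₂ - m₂) * (b - a) ^ 2) →
        A ≥ 1 / 288 := by
  have hC2 := contDiff_two_of_hasDerivAt hasDerivAt_abs_pow_three_div_six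
    hasDerivAt_mul_abs_div_two continuous_abs
  have hbounds : ∀ x ∈ Icc (-x₀) x₀, 0 ≤ iteratedDeriv 2 (fun x : ℝ => |x| ^ 3 / 6) x ∧
      iteratedDeriv 2 (fun x : ℝ => |x| ^ 3 / 6) x ≤ x₀ := fun x hx => by
    rw [iteratedDeriv_two_of_hasDerivAt hasDerivAt_abs_pow_three_div_six
      hasDerivAt_mul_abs_div_two]
    exact ⟨abs_nonneg x, abs_le.2 hx⟩
  have hT : |((|(-x₀ : ℝ)| ^ 3 / 6 + |x₀| ^ 3 / 6) / 6 + 2 / 3 * (|(0 : ℝ)| ^ 3 / 6) -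
      (1 / (x₀ - -x₀)) * ∫ t in (-x₀)..x₀, |t| ^ 3 / 6)| =
      1 / 288 * (x₀ - 0) * (x₀ - -x₀) ^ 2 := by
    have hsimpson : (x₀ ^ 3 / 6 + x₀ ^ 3 / 6) / 6 + 2 / 3 * ((0 : ℝ) ^ 3 / 6) -
        1 / (x₀ - -x₀) * (x₀ ^ 4 / 12) = x₀ ^ 3 / 72 := by
      field_simp; ring
    rw [integral_abs_pow_three_div_six hx₀.le, abs_neg, abs_of_pos hx₀, abs_zero, hsimpson,
      abs_of_pos (by positivity)]
    ring
  refine ⟨hC2, hbounds, hT, fun A hA => ?_⟩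
  have h := hA (-x₀) x₀ (by linarith) _ hC2 0 x₀ hbounds
  rw [show (-x₀ + x₀) / 2 = 0 by ring, hT, mul_assoc, mul_assoc] at h
  exact le_of_mul_le_mul_right h (by rw [sub_zero, sub_neg_eq_add]; positivity)
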